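/- arXiv:1804.00957 — 2 statements merged into one kernel-verified Lean document; each statement's English description precedes it below -/
import Mathlib

section
/- Let n ≥ 3 and let J be the even subgraph of the wheel W_n consisting of all edges of the external cycle. Then W_n admits a σ_{J,(1,2)∪(3,4)}-faithful flow if and only if n is even. (Equivalently, every graph in the family (W_n, J_{(1,2)∪(3,4)}) has circular flow number at least 5 if and only if n is odd.) -/
open scoped Classical

/-- A finite multigraph: finite vertex and edge types together with a reference
orientation recorded by source and target maps.  The underlying undirected graph
is obtained by forgetting the directions; reorienting an edge corresponds to
negating the value of a flow on it. -/
structure Multigraph where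
  V : Type
  E : Type
  [fintypeV : Fintype V]
  [fintypeE : Fintype E]
  src : E → V
  tgt : E → V

attribute [instance] Multigraph.fintypeV Multigraph.fintypeE

namespace Multigraph

/-- `f` is a flow with respect to the reference orientation: at every vertex the
sum of the values on incoming edges equals the sum on outgoing edges. -/
def IsFlow (G : Multigraph) {M : Type*} [AddCommMonoid M] (f : G.E → M) : Prop :=
  ∀ v : G.V, (∑ e : G.E, Set.indicator {e' : G.E | G.tgt e' = v} f e)
           = ∑ e : G.E, Set.indicator {e' : G.E | G.src e' = v} f e

/-- The edge `e` joins the vertices `v` and `w` (in either direction). -/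
def Joins (G : Multigraph) (e : G.E) (v w : G.V) : Prop :=
  (G.src e = v ∧ G.tgt e = w) ∨ (G.src e = w ∧ G.tgt e = v)

/-- `v` and `w` are adjacent: some edge joins them. -/
def Adj (G : Multigraph) (v w : G.V) : Prop := ∃ e : G.E, G.Joins e v w

/-- The degree of a vertex (loops count twice). -/
noncomputable def degree (G : Multigraph) (v : G.V) : ℕ :=
  Nat.card {e : G.E // G.src e = v} + Nat.card {e : G.E // G.tgt e = v}

/-- A set of edges is an even subgraph if every vertex is incident with an even
number of its edges (loops counting twice). -/
def IsEvenSubgraph (G : Multigraph) (J : Set G.E) : Prop :=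
  ∀ v : G.V, Even (Nat.card {e : G.E // e ∈ J ∧ G.src e = v}
    + Nat.card {e : G.E // e ∈ J ∧ G.tgt e = v})

/-- `G` has a circular nowhere-zero `r`-flow: for some orientation (encoded by
possibly negating values with respect to the reference orientation) there is a
real-valued flow with all values in `[1, r-1]`. -/
def HasCNZF (G : Multigraph) (r : ℝ) : Prop :=
  ∃ f : G.E → ℝ, G.IsFlow f ∧
    ∀ e : G.E, f e ∈ Set.Icc 1 (r - 1) ∨ -f e ∈ Set.Icc 1 (r - 1)

/-- The circular flow number `Φ_c(G)`, as an extended real (`⊤` if no `r`-CNZF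
exists for any `r ≥ 2`). -/
noncomputable def flowNumber (G : Multigraph) : EReal :=
  sInf {x : EReal | ∃ r : ℝ, x = (r : EReal) ∧ 2 ≤ r ∧ G.HasCNZF r}

/-- `G` has a modular circular nowhere-zero `r`-flow: a flow with values in
`ℝ/rℤ` lying (up to reorientation) in the image of `[1, r-1]`. -/
def HasMCNZF (G : Multigraph) (r : ℝ) : Prop :=
  ∃ f : G.E → AddCircle r, G.IsFlow f ∧
    ∀ e : G.E, f e ∈ (fun t : ℝ => (t : AddCircle r)) '' Set.Icc 1 (r - 1) ∨
      -f e ∈ (fun t : ℝ => (t : AddCircle r)) '' Set.Icc 1 (r - 1)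

/-- `G` has a sub-`r`-MCNZF: an `r`-MCNZF all of whose values lie in the image
of the open interval `(1, r-1)`. -/
def HasSubMCNZF (G : Multigraph) (r : ℝ) : Prop :=
  ∃ f : G.E → AddCircle r, G.IsFlow f ∧
    ∀ e : G.E, f e ∈ (fun t : ℝ => (t : AddCircle r)) '' Set.Ioo 1 (r - 1) ∨
      -f e ∈ (fun t : ℝ => (t : AddCircle r)) '' Set.Ioo 1 (r - 1)

end Multigraph

/-- The right endpoint representative: the representative of `b` in `(a, a+5]`. -/
def arcEnd (a b : ℤ) : ℤ := a + (if (b - a) % 5 = 0 then 5 else (b - a) % 5)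

/-- The open integer arc `(a, b)` in `ℝ/5ℤ`: the image of the real interval
`(a, b')` where `b'` is the representative of `b` in `(a, a+5]`. -/
def arc (a b : ℤ) : Set (AddCircle (5 : ℝ)) :=
  (fun t : ℝ => (t : AddCircle (5 : ℝ))) '' Set.Ioo (a : ℝ) (arcEnd a b : ℝ)

/-- `SI_5`: the symmetric subsets of `ℝ/5ℤ` that are unions of open integer arcs. -/
def SI5 : Set (Set (AddCircle (5 : ℝ))) :=
  {A | (∀ z, z ∈ A ↔ -z ∈ A) ∧ ∃ s : Set (ℤ × ℤ), A = ⋃ p ∈ s, arc p.1 p.2}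

/-- The measure `Me A`: the number of (distinct) open unit arcs contained in `A`. -/
noncomputable def Me (A : Set (AddCircle (5 : ℝ))) : ℕ :=
  Set.ncard {B : Set (AddCircle (5 : ℝ)) | B ⊆ A ∧ ∃ k : ℤ, B = arc k (k + 1)}

namespace Multigraph

/-- `G⁺_{xy}`: the graph `G` with one extra edge `e⁺` from `x` to `y`. -/
def addEdge (G : Multigraph) (x y : G.V) : Multigraph where
  V := G.V
  E := Option G.E
  src := fun e => e.elim x G.src
  tgt := fun e => e.elim y G.tgt

/-- The open 5-capacity of the generalised edge `G_{xy}`: all values that can pass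
from `x` to `y` through `G` by a modular 5-flow of `G⁺_{xy}` whose values on the
edges of `G` lie in the open arc `(1,4)`. -/
def CP5 (G : Multigraph) (x y : G.V) : Set (AddCircle (5 : ℝ)) :=
  {w | ∃ f : Option G.E → AddCircle (5 : ℝ),
    (G.addEdge x y).IsFlow f ∧ (∀ e : G.E, f (some e) ∈ arc 1 4) ∧ f none = w}

/-- `G` has a sub-5-MCNZF: a modular 5-flow with all values in the open arc `(1,4)`. -/
def HasSub5 (G : Multigraph) : Prop :=
  ∃ f : G.E → AddCircle (5 : ℝ), G.IsFlow f ∧ ∀ e : G.E, f e ∈ arc 1 4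

/-- `G` has a `σ`-faithful flow: a modular 5-flow `f` with `f e ∈ σ e` for all `e`. -/
def HasFaithful (G : Multigraph) (σ : G.E → Set (AddCircle (5 : ℝ))) : Prop :=
  ∃ f : G.E → AddCircle (5 : ℝ), G.IsFlow f ∧ ∀ e : G.E, f e ∈ σ e

/-- `G` has a `σ_{J,A}`-faithful flow: a modular 5-flow with values in `A` on the
edges of `J` and in the open arc `(1,4)` on all other edges. -/
def HasFaithfulOn (G : Multigraph) (J : Set G.E) (A : Set (AddCircle (5 : ℝ))) : Prop :=
  ∃ f : G.E → AddCircle (5 : ℝ), G.IsFlow f ∧ (∀ e ∈ J, f e ∈ A) ∧ ∀ e ∉ J, f e ∈ arc 1 4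

end Multigraph

/-- Cyclic successor on `Fin n`. -/
def rot (n : ℕ) (i : Fin n) : Fin n := ⟨(i.val + 1) % n, Nat.mod_lt _ i.pos⟩

/-- The wheel `W_n`: the external cycle `v_1 … v_n` (vertices `some i`, rim edges
`Sum.inl i` from `v_i` to `v_{i+1}`) together with a hub `v_c = none` joined to
every rim vertex by the spokes `Sum.inr i`. -/
def wheel (n : ℕ) : Multigraph where
  V := Option (Fin n)
  E := Fin n ⊕ Fin n
  src := fun e => match e with
    | Sum.inl i => some i
    | Sum.inr _ => none
  tgt := fun e => match e with
    | Sum.inl i => some (rot n i)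
    | Sum.inr i => some i

/- ### Auxiliary lemmas -/

lemma coe_eq_coe5 {a b : ℝ} :
    (a : AddCircle (5 : ℝ)) = (b : AddCircle (5 : ℝ)) ↔ ∃ k : ℤ, a - b = k * 5 := by
  rw [show ((a : AddCircle (5 : ℝ)) = (b : AddCircle (5 : ℝ))) ↔
      a - b ∈ AddSubgroup.zmultiples (5 : ℝ) from QuotientAddGroup.eq_iff_sub_mem,
    AddSubgroup.mem_zmultiples_iff]
  constructor
  · rintro ⟨k, hk⟩; exact ⟨k, by rw [← hk, zsmul_eq_mul]⟩
  · rintro ⟨k, hk⟩; exact ⟨k, by rw [zsmul_eq_mul, hk]⟩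

lemma arc12_eq : arc 1 2 = (fun t : ℝ => (t : AddCircle (5 : ℝ))) '' Set.Ioo 1 2 := by
  have : arcEnd 1 2 = 2 := by decide
  simp [arc, this]

lemma arc34_eq : arc 3 4 = (fun t : ℝ => (t : AddCircle (5 : ℝ))) '' Set.Ioo 3 4 := by
  have : arcEnd 3 4 = 4 := by decide
  simp [arc, this]

lemma arc14_eq : arc 1 4 = (fun t : ℝ => (t : AddCircle (5 : ℝ))) '' Set.Ioo 1 4 := by
  have : arcEnd 1 4 = 4 := by decide
  simp [arc, this]

/-- Core real arithmetic: two consecutive rim values must lie in different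
components of `(1,2) ∪ (3,4)`. -/
lemma alternate_core {s t u : ℝ} {k : ℤ}
    (hs : s ∈ Set.Ioo (1:ℝ) 2 ∨ s ∈ Set.Ioo (3:ℝ) 4)
    (ht : t ∈ Set.Ioo (1:ℝ) 2 ∨ t ∈ Set.Ioo (3:ℝ) 4)
    (hu : u ∈ Set.Ioo (1:ℝ) 4)
    (hk : t - s - u = k * 5) : (s < 2 ↔ ¬ t < 2) := by
  simp only [Set.mem_Ioo] at hs ht hu
  have hkr : (-7 : ℝ) < (k : ℝ) * 5 ∧ (k : ℝ) * 5 < 2 := by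
    constructor <;> rcases hs with hs | hs <;> rcases ht with ht | ht <;> nlinarith
  have hk01 : k = 0 ∨ k = -1 := by
    have hb : (-2 : ℝ) < (k : ℝ) ∧ (k : ℝ) < 1 := by
      constructor <;> nlinarith [hkr.1, hkr.2]
    have hb1 : (-2 : ℤ) < k := by exact_mod_cast hb.1
    have hb2 : k < 1 := by exact_mod_cast hb.2
    omega
  rcases hk01 with rfl | rfl <;>
    rcases hs with hs | hs <;> rcases ht with ht | ht <;>
    push_cast at hk <;> constructor <;> intro h <;> (try intro h') <;> nlinarith

/-- Parity argument: a boolean labelling of `Fin n` that flips along `rot`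
forces `n` even. -/
lemma even_of_alternating {n : ℕ} (hn : 0 < n) (B : Fin n → Bool)
    (hB : ∀ i, B (rot n i) = ! B i) : Even n := by
  set c : ℕ → Bool := fun k => B ⟨k % n, Nat.mod_lt _ hn⟩ with hc
  have hstep : ∀ k, c (k + 1) = ! c k := by
    intro k
    have : rot n ⟨k % n, Nat.mod_lt _ hn⟩ = ⟨(k + 1) % n, Nat.mod_lt _ hn⟩ := by
      simp [rot, Nat.mod_add_mod]
    simpa [hc, this] using hB ⟨k % n, Nat.mod_lt _ hn⟩
  have hdouble : ∀ k, c (2 * k) = c 0 := by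
    intro k
    induction k with
    | zero => rfl
    | succ m ih =>
        have : 2 * (m + 1) = 2 * m + 1 + 1 := by ring
        rw [this, hstep, hstep, Bool.not_not, ih]
  by_contra hodd
  obtain ⟨m, hm⟩ : ∃ m, n = 2 * m + 1 := by
    rcases Nat.even_or_odd n with h | h
    · exact absurd h hodd
    · exact h
  have h1 : c n = c 0 := by simp [hc, Nat.mod_self, Nat.zero_mod]
  have h2 : c n = ! c 0 := by rw [hm, hstep, hdouble]
  rw [h1] at h2
  simp at h2

section WheelFlow

variable {n : ℕ}

lemma rot_eq_add_one [NeZero n] (hn : 3 ≤ n) (i : Fin n) : rot n i = i + 1 := by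
  have h1 : (1 : Fin n).val = 1 := by
    rw [Fin.val_one']; exact Nat.mod_eq_of_lt (by omega)
  apply Fin.ext
  rw [Fin.add_def, h1]
  rfl

/-- Characterisation of flows on the wheel. -/
lemma wheel_isFlow_iff [NeZero n] (hn : 3 ≤ n) {M : Type*} [AddCommGroup M]
    (f : Fin n ⊕ Fin n → M) :
    (wheel n).IsFlow f ↔
      ((0 : M) = ∑ j : Fin n, f (Sum.inr j)) ∧
        ∀ i : Fin n, f (Sum.inl (i - 1)) + f (Sum.inr i) = f (Sum.inl i) := by
  have key : ∀ v : Option (Fin n),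
      ((∑ e : Fin n ⊕ Fin n,
          Set.indicator {e' : Fin n ⊕ Fin n | (wheel n).tgt e' = v} f e)
        = ∑ e : Fin n ⊕ Fin n,
          Set.indicator {e' : Fin n ⊕ Fin n | (wheel n).src e' = v} f e) ↔
      (match v with
        | none => (0 : M) = ∑ j : Fin n, f (Sum.inr j)
        | some i => f (Sum.inl (i - 1)) + f (Sum.inr i) = f (Sum.inl i)) := by
    intro v
    rw [Fintype.sum_sum_type, Fintype.sum_sum_type]
    match v with
    | none =>
      have h1 : ∀ j : Fin n,
          Set.indicator {e' : Fin n ⊕ Fin n | (wheel n).tgt e' = none} f (Sum.inl j) = 0 := by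
        intro j; apply Set.indicator_of_notMem; simp [wheel]
      have h2 : ∀ j : Fin n,
          Set.indicator {e' : Fin n ⊕ Fin n | (wheel n).tgt e' = none} f (Sum.inr j) = 0 := by
        intro j; apply Set.indicator_of_notMem; simp [wheel]
      have h3 : ∀ j : Fin n,
          Set.indicator {e' : Fin n ⊕ Fin n | (wheel n).src e' = none} f (Sum.inl j) = 0 := by
        intro j; apply Set.indicator_of_notMem; simp [wheel]
      have h4 : ∀ j : Fin n,
          Set.indicator {e' : Fin n ⊕ Fin n | (wheel n).src e' = none} f (Sum.inr j)
            = f (Sum.inr j) := by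
        intro j; apply Set.indicator_of_mem; simp [wheel]
      simp only [h1, h2, h3, h4, Finset.sum_const_zero, add_zero, zero_add]
    | some i =>
      have h1 : (∑ j : Fin n,
          Set.indicator {e' : Fin n ⊕ Fin n | (wheel n).tgt e' = some i} f (Sum.inl j))
            = f (Sum.inl (i - 1)) := by
        have heq : ∀ j : Fin n, ((wheel n).tgt (Sum.inl j) = some i) ↔ j = i - 1 := by
          intro j
          simp only [wheel, Option.some.injEq]
          rw [rot_eq_add_one hn]
          constructor
          · intro h; rw [← h]; simp
          · intro h; rw [h]; simp
        calc (∑ j : Fin n,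
              Set.indicator {e' : Fin n ⊕ Fin n | (wheel n).tgt e' = some i} f (Sum.inl j))
            = ∑ j : Fin n, if j = i - 1 then f (Sum.inl j) else 0 := by
              apply Finset.sum_congr rfl; intro j _
              rw [Set.indicator_apply]
              simp only [Set.mem_setOf_eq, heq j]
          _ = f (Sum.inl (i - 1)) := by rw [Finset.sum_ite_eq' Finset.univ (i-1)]; simp
      have h2 : (∑ j : Fin n,
          Set.indicator {e' : Fin n ⊕ Fin n | (wheel n).tgt e' = some i} f (Sum.inr j))
            = f (Sum.inr i) := by
        calc (∑ j : Fin n,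
              Set.indicator {e' : Fin n ⊕ Fin n | (wheel n).tgt e' = some i} f (Sum.inr j))
            = ∑ j : Fin n, if j = i then f (Sum.inr j) else 0 := by
              apply Finset.sum_congr rfl; intro j _
              rw [Set.indicator_apply]
              simp [wheel]
          _ = f (Sum.inr i) := by rw [Finset.sum_ite_eq' Finset.univ i]; simp
      have h3 : (∑ j : Fin n,
          Set.indicator {e' : Fin n ⊕ Fin n | (wheel n).src e' = some i} f (Sum.inl j))
            = f (Sum.inl i) := by
        calc (∑ j : Fin n,
              Set.indicator {e' : Fin n ⊕ Fin n | (wheel n).src e' = some i} f (Sum.inl j))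
            = ∑ j : Fin n, if j = i then f (Sum.inl j) else 0 := by
              apply Finset.sum_congr rfl; intro j _
              rw [Set.indicator_apply]
              simp [wheel]
          _ = f (Sum.inl i) := by rw [Finset.sum_ite_eq' Finset.univ i]; simp
      have h4 : ∀ j : Fin n,
          Set.indicator {e' : Fin n ⊕ Fin n | (wheel n).src e' = some i} f (Sum.inr j) = 0 := by
        intro j; apply Set.indicator_of_notMem; simp [wheel]
      simp only [h1, h2, h3, h4, Finset.sum_const_zero, add_zero]
  constructor
  · intro hf
    refine ⟨(key none).mp (hf none), fun i => (key (some i)).mp (hf (some i))⟩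
  · rintro ⟨h0, hi⟩ v
    match v with
    | none => exact (key none).mpr h0
    | some i => exact (key (some i)).mpr (hi i)

end WheelFlow

/-- for `n ≥ 3` and `J` the external cycle of the wheel `W_n`, the
wheel admits a `σ_{J,(1,2)∪(3,4)}`-faithful flow iff `n` is even. -/
theorem wheel_ext_cycle_faithful_iff (n : ℕ) (hn : 3 ≤ n) :
    (wheel n).HasFaithfulOn (Set.range Sum.inl) (arc 1 2 ∪ arc 3 4) ↔ Even n := by
  haveI : NeZero n := ⟨by omega⟩
  constructor
  · -- faithful flow → n even
    rintro ⟨f, hflow, hJ, hnJ⟩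
    have hflow' := (wheel_isFlow_iff hn f).mp hflow
    -- real representatives for rim values
    have hr : ∀ i : Fin n, ∃ x : ℝ,
        (x ∈ Set.Ioo (1:ℝ) 2 ∨ x ∈ Set.Ioo (3:ℝ) 4) ∧ (x : AddCircle (5:ℝ)) = f (Sum.inl i) := by
      intro i
      have := hJ (Sum.inl i) ⟨i, rfl⟩
      rcases this with h | h
      · rw [arc12_eq] at h; obtain ⟨x, hx, hxe⟩ := h; exact ⟨x, Or.inl hx, hxe⟩
      · rw [arc34_eq] at h; obtain ⟨x, hx, hxe⟩ := h; exact ⟨x, Or.inr hx, hxe⟩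
    have hs : ∀ i : Fin n, ∃ x : ℝ,
        x ∈ Set.Ioo (1:ℝ) 4 ∧ (x : AddCircle (5:ℝ)) = f (Sum.inr i) := by
      intro i
      have hni : Sum.inr i ∉ Set.range (Sum.inl : Fin n → Fin n ⊕ Fin n) := by
        rintro ⟨j, hj⟩; exact Sum.inl_ne_inr hj
      have := hnJ (Sum.inr i) hni
      rw [arc14_eq] at this
      obtain ⟨x, hx, hxe⟩ := this; exact ⟨x, hx, hxe⟩
    choose r hrmem hrcoe using hr
    choose s hsmem hscoe using hs
    -- alternation
    set B : Fin n → Bool := fun i => decide (r i < 2) with hBdef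
    have halt : ∀ i : Fin n, B (rot n i) = ! B i := by
      intro i
      rw [rot_eq_add_one hn]
      have hv := hflow'.2 (i + 1)
      rw [add_sub_cancel_right] at hv
      rw [← hrcoe i, ← hscoe (i+1), ← hrcoe (i+1)] at hv
      have : ((r i + s (i+1) : ℝ) : AddCircle (5:ℝ)) = ((r (i+1) : ℝ) : AddCircle (5:ℝ)) := by
        rw [AddCircle.coe_add]; exact hv
      obtain ⟨k, hk⟩ := coe_eq_coe5.mp this.symm
      have hiff : (r i < 2 ↔ ¬ r (i+1) < 2) :=
        alternate_core (hrmem i) (hrmem (i+1)) (hsmem (i+1)) (by linarith)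
      simp only [hBdef]
      rcases Classical.em (r i < 2) with h | h
      · simp [h, hiff.mp h]
      · have h2 : r (i+1) < 2 := by
          by_contra h3
          exact h (hiff.mpr h3)
        simp [h, h2]
    exact even_of_alternating (by omega) B halt
  · -- n even → construct flow
    intro hne
    obtain ⟨m, hm⟩ := hne
    have hm' : n = 2 * m := by omega
    set g : Fin n ⊕ Fin n → ℝ :=
      Sum.elim (fun i => if i.val % 2 = 0 then (3/2 : ℝ) else 7/2)
               (fun i => if i.val % 2 = 0 then (-2 : ℝ) else 2) with hg
    set F : Fin n ⊕ Fin n → AddCircle (5:ℝ) := fun e => ((g e : ℝ) : AddCircle (5:ℝ)) with hF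
    -- parity of i - 1 is opposite to that of i
    have hpar : ∀ i : Fin n, ((i - 1 : Fin n)).val % 2 ≠ i.val % 2 := by
      intro i
      have h1v : ((1 : Fin n)).val = 1 := by
        rw [Fin.val_one']; exact Nat.mod_eq_of_lt (by omega)
      have hval : ((i - 1 : Fin n)).val = (n - 1 + i.val) % n := by
        simp only [Fin.sub_def, h1v]
      by_cases h0 : i.val = 0
      · have hv2 : ((i - 1 : Fin n)).val = n - 1 := by
          rw [hval, h0, Nat.add_zero]; exact Nat.mod_eq_of_lt (by omega)
        rw [hv2, h0]
        omega
      · have hlt : i.val < n := i.isLt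
        have heq2 : (n - 1 + i.val) % n = i.val - 1 := by
          have : n - 1 + i.val = (i.val - 1) + n := by omega
          rw [this, Nat.add_mod_right, Nat.mod_eq_of_lt (by omega)]
        rw [hval, heq2]
        omega
    -- vertex conditions hold already in ℝ
    have hvertexR : ∀ i : Fin n, g (Sum.inl (i - 1)) + g (Sum.inr i) = g (Sum.inl i) := by
      intro i
      have := hpar i
      simp only [hg, Sum.elim_inl, Sum.elim_inr]
      by_cases h : i.val % 2 = 0
      · have h1 : ¬ ((i - 1 : Fin n)).val % 2 = 0 := by omega
        rw [if_pos h, if_pos h, if_neg h1]; norm_num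
      · have h1 : ((i - 1 : Fin n)).val % 2 = 0 := by omega
        rw [if_neg h, if_neg h, if_pos h1]; norm_num
    have hvertex : ∀ i : Fin n, F (Sum.inl (i - 1)) + F (Sum.inr i) = F (Sum.inl i) := by
      intro i
      simp only [hF]
      rw [← AddCircle.coe_add, hvertexR i]
    refine ⟨F, ?_, ?_, ?_⟩
    · rw [wheel_isFlow_iff hn]
      refine ⟨?_, hvertex⟩
      -- hub condition follows from vertex conditions
      have : (∑ j : Fin n, F (Sum.inr j))
          = ∑ j : Fin n, (F (Sum.inl j) - F (Sum.inl (j - 1))) := by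
        apply Finset.sum_congr rfl
        intro j _
        rw [eq_sub_iff_add_eq, add_comm, hvertex j]
      rw [this, Finset.sum_sub_distrib]
      have hre : (∑ j : Fin n, F (Sum.inl (j - 1))) = ∑ j : Fin n, F (Sum.inl j) := by
        apply Fintype.sum_equiv (Equiv.subRight (1 : Fin n)) _ _
        intro j
        rfl
      rw [hre, sub_self]
    · rintro e ⟨i, rfl⟩
      by_cases h : i.val % 2 = 0
      · left; rw [arc12_eq]
        refine ⟨3/2, by norm_num, ?_⟩
        simp only [hF, hg, Sum.elim_inl, if_pos h]
      · right; rw [arc34_eq]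
        refine ⟨7/2, by norm_num, ?_⟩
        simp only [hF, hg, Sum.elim_inl, if_neg h]
    · intro e he
      match e with
      | Sum.inl i => exact absurd ⟨i, rfl⟩ he
      | Sum.inr i =>
        rw [arc14_eq]
        by_cases h : i.val % 2 = 0
        · refine ⟨3, by norm_num, ?_⟩
          have h35 : ((3:ℝ) : AddCircle (5:ℝ)) = ((-2:ℝ) : AddCircle (5:ℝ)) :=
            coe_eq_coe5.mpr ⟨1, by norm_num⟩
          show ((3:ℝ) : AddCircle (5:ℝ)) = F (Sum.inr i)
          rw [h35]
          simp only [hF, hg, Sum.elim_inr, if_pos h]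
        · refine ⟨2, by norm_num, ?_⟩
          simp only [hF, hg, Sum.elim_inr, if_neg h]
end

section
/- Let J be a nonempty even subgraph of the wheel W_n. If n ≥ 4 and J is not the edge set of the external cycle of W_n, then W_n admits a σ_{J,(1,2)∪(3,4)}-faithful flow. If n = 3, then W_3 admits a σ_{J,(1,2)∪(3,4)}-faithful flow if and only if J is not a 3-cycle (equivalently, J is a 4-cycle of W_3 = K_4). -/
open scoped Classical

/-- A set of edges of a wheel is a triangle (3-cycle) of `W_3 = K_4` iff it
consists of exactly the edges avoiding one vertex. -/
def IsTriangle (n : ℕ) (J : Set (wheel n).E) : Prop :=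
  ∃ v : (wheel n).V, J = {e : (wheel n).E | (wheel n).src e ≠ v ∧ (wheel n).tgt e ≠ v}


set_option linter.unusedSectionVars false
section WheelAux

lemma fin_sub_one_val {n : ℕ} [NeZero n] (d : Fin n) (hn : 2 ≤ n) :
    (d - 1).val = if d.val = 0 then n - 1 else d.val - 1 := by
  rw [Fin.sub_def]
  have h1 : ((1:Fin n):ℕ) = 1 := by
    rw [Fin.val_one']; exact Nat.mod_eq_of_lt (by omega)
  simp only [h1]
  rcases Nat.eq_zero_or_pos d.val with h | h
  · rw [if_pos h, h, add_zero, Nat.mod_eq_of_lt (by omega)]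
  · rw [if_neg (by omega)]
    have h2 : n - 1 + d.val = (d.val - 1) + n := by omega
    rw [h2, Nat.add_mod_right, Nat.mod_eq_of_lt (by omega)]

variable {n : ℕ} [NeZero n] {M : Type*} [AddCommGroup M]

lemma rot_eq (i : Fin n) : rot n i = i + 1 := by
  apply Fin.ext
  simp only [rot, Fin.add_def, Fin.val_one']
  rw [Nat.add_mod i.val 1 n, Nat.mod_eq_of_lt i.isLt]

lemma wheel_src_inl (i : Fin n) : (wheel n).src (Sum.inl i) = some i := rfl
lemma wheel_src_inr (i : Fin n) : (wheel n).src (Sum.inr i) = none := rfl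
lemma wheel_tgt_inl (i : Fin n) : (wheel n).tgt (Sum.inl i) = some (i + 1) := by
  show some (rot n i) = _
  rw [rot_eq]
lemma wheel_tgt_inr (i : Fin n) : (wheel n).tgt (Sum.inr i) = some i := rfl

lemma sum_tgt_none (f : (wheel n).E → M) :
    (∑ e : (wheel n).E, Set.indicator {e' : (wheel n).E | (wheel n).tgt e' = none} f e) = 0 := by
  apply Finset.sum_eq_zero
  intro e _
  apply Set.indicator_of_notMem
  rcases e with i | i <;> exact (fun h => by cases h)

lemma sum_src_none (f : (wheel n).E → M) :
    (∑ e : (wheel n).E, Set.indicator {e' : (wheel n).E | (wheel n).src e' = none} f e)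
      = ∑ i : Fin n, f (Sum.inr i) := by
  erw [show (∑ e : (wheel n).E, Set.indicator {e' : (wheel n).E | (wheel n).src e' = none} f e) = ∑ e : Fin n ⊕ Fin n, Set.indicator {e' : (wheel n).E | (wheel n).src e' = none} f e from rfl,
     Fintype.sum_sum_type]
  have h1 : ∀ i : Fin n, Set.indicator {e' : (wheel n).E | (wheel n).src e' = none} f (Sum.inl i) = 0 := by
    intro i; apply Set.indicator_of_notMem; exact (fun h => by cases h)
  have h2 : ∀ i : Fin n, Set.indicator {e' : (wheel n).E | (wheel n).src e' = none} f (Sum.inr i) = f (Sum.inr i) := by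
    intro i; apply Set.indicator_of_mem; exact rfl
  simp only [h1, h2, Finset.sum_const_zero, zero_add]

lemma sum_src_some (f : (wheel n).E → M) (j : Fin n) :
    (∑ e : (wheel n).E, Set.indicator {e' : (wheel n).E | (wheel n).src e' = some j} f e)
      = f (Sum.inl j) := by
  erw [show (∑ e : (wheel n).E, Set.indicator {e' : (wheel n).E | (wheel n).src e' = some j} f e) = ∑ e : Fin n ⊕ Fin n, Set.indicator {e' : (wheel n).E | (wheel n).src e' = some j} f e from rfl,
     Fintype.sum_sum_type]
  have h1 : ∀ i : Fin n, Set.indicator {e' : (wheel n).E | (wheel n).src e' = some j} f (Sum.inl i)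
      = if i = j then f (Sum.inl i) else 0 := by
    intro i
    by_cases h : i = j
    · rw [if_pos h]; apply Set.indicator_of_mem; subst h; exact rfl
    · rw [if_neg h]; apply Set.indicator_of_notMem
      exact fun hh => h (Option.some.inj hh)
  have h2 : ∀ i : Fin n, Set.indicator {e' : (wheel n).E | (wheel n).src e' = some j} f (Sum.inr i) = 0 := by
    intro i; apply Set.indicator_of_notMem; exact (fun h => by cases h)
  simp only [h1, h2, Finset.sum_const_zero, add_zero]
  rw [Finset.sum_ite_eq' Finset.univ j (fun i => f (Sum.inl i))]
  simp

lemma sum_tgt_some (f : (wheel n).E → M) (j : Fin n) :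
    (∑ e : (wheel n).E, Set.indicator {e' : (wheel n).E | (wheel n).tgt e' = some j} f e)
      = f (Sum.inl (j - 1)) + f (Sum.inr j) := by
  erw [show (∑ e : (wheel n).E, Set.indicator {e' : (wheel n).E | (wheel n).tgt e' = some j} f e) = ∑ e : Fin n ⊕ Fin n, Set.indicator {e' : (wheel n).E | (wheel n).tgt e' = some j} f e from rfl,
     Fintype.sum_sum_type]
  have key : ∀ i : Fin n, (i + 1 = j) ↔ i = j - 1 := by
    intro i; constructor
    · intro h; rw [← h]; abel
    · intro h; rw [h]; abel
  have h1 : ∀ i : Fin n, Set.indicator {e' : (wheel n).E | (wheel n).tgt e' = some j} f (Sum.inl i)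
      = if i = j - 1 then f (Sum.inl i) else 0 := by
    intro i
    by_cases h : i = j - 1
    · rw [if_pos h]; apply Set.indicator_of_mem
      show (wheel n).tgt (Sum.inl i) = some j
      rw [wheel_tgt_inl]
      exact congrArg some ((key i).mpr h)
    · rw [if_neg h]; apply Set.indicator_of_notMem
      intro hh
      have hh2 : (wheel n).tgt (Sum.inl i) = some j := hh
      rw [wheel_tgt_inl] at hh2
      exact h ((key i).mp (Option.some.inj hh2))
  have h2 : ∀ i : Fin n, Set.indicator {e' : (wheel n).E | (wheel n).tgt e' = some j} f (Sum.inr i)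
      = if i = j then f (Sum.inr i) else 0 := by
    intro i
    by_cases h : i = j
    · rw [if_pos h]; apply Set.indicator_of_mem; subst h; exact rfl
    · rw [if_neg h]; apply Set.indicator_of_notMem
      exact fun hh => h (Option.some.inj hh)
  simp only [h1, h2]
  rw [Finset.sum_ite_eq' Finset.univ (j-1) (fun i => f (Sum.inl i)),
      Finset.sum_ite_eq' Finset.univ j (fun i => f (Sum.inr i))]
  simp

lemma wheel_isFlow (r : Fin n → M) :
    (wheel n).IsFlow (Sum.elim r (fun i => r i - r (i - 1))) := by
  intro v
  rcases v with _ | j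
  · erw [sum_tgt_none, sum_src_none]
    have : (∑ i : Fin n, (r i - r (i - 1))) = (∑ i : Fin n, r i) - ∑ i : Fin n, r (i - 1) := by
      rw [Finset.sum_sub_distrib]
    have h2 : (∑ i : Fin n, r (i - 1)) = ∑ i : Fin n, r i :=
      Fintype.sum_equiv (Equiv.subRight (1 : Fin n)) _ _ (fun i => rfl)
    show (0:M) = ∑ i : Fin n, (Sum.elim r (fun i => r i - r (i-1)) (Sum.inr i))
    simp only [Sum.elim_inr]
    rw [this, h2, sub_self]
  · erw [sum_tgt_some, sum_src_some]
    simp only [Sum.elim_inl, Sum.elim_inr]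
    abel

lemma flow_spoke {f : (wheel n).E → M} (hf : (wheel n).IsFlow f) (j : Fin n) :
    f (Sum.inr j) = f (Sum.inl j) - f (Sum.inl (j - 1)) := by
  have := hf (some j)
  rw [sum_tgt_some, sum_src_some] at this
  rw [← this]; abel

end WheelAux

lemma ncard_inter_singleton {α : Type} (J : Set α) (a : α) :
    (J ∩ {a}).ncard = (if a ∈ J then 1 else 0) := by
  by_cases h : a ∈ J
  · rw [if_pos h, Set.inter_eq_right.mpr (by simpa using h), Set.ncard_singleton]
  · rw [if_neg h, Set.inter_singleton_eq_empty.mpr h, Set.ncard_empty]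

lemma ncard_inter_pair {α : Type} (J : Set α) (a b : α) (hab : a ≠ b) :
    (J ∩ {a, b}).ncard = (if a ∈ J then 1 else 0) + (if b ∈ J then 1 else 0) := by
  by_cases ha : a ∈ J <;> by_cases hb : b ∈ J
  · rw [if_pos ha, if_pos hb, Set.inter_eq_right.mpr (Set.insert_subset_iff.mpr ⟨ha, Set.singleton_subset_iff.mpr hb⟩),
      Set.ncard_pair hab]
  · rw [if_pos ha, if_neg hb]
    have : J ∩ {a, b} = {a} := by
      ext x
      simp only [Set.mem_inter_iff, Set.mem_insert_iff, Set.mem_singleton_iff]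
      constructor
      · rintro ⟨hx, rfl | rfl⟩
        · rfl
        · exact absurd hx hb
      · rintro rfl; exact ⟨ha, Or.inl rfl⟩
    rw [this, Set.ncard_singleton]
  · rw [if_neg ha, if_pos hb]
    have : J ∩ {a, b} = {b} := by
      ext x
      simp only [Set.mem_inter_iff, Set.mem_insert_iff, Set.mem_singleton_iff]
      constructor
      · rintro ⟨hx, rfl | rfl⟩
        · exact absurd hx ha
        · rfl
      · rintro rfl; exact ⟨hb, Or.inr rfl⟩
    rw [this, Set.ncard_singleton]
  · rw [if_neg ha, if_neg hb]
    have : J ∩ {a, b} = ∅ := by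
      ext x
      simp only [Set.mem_inter_iff, Set.mem_insert_iff, Set.mem_singleton_iff]
      constructor
      · rintro ⟨hx, rfl | rfl⟩
        · exact absurd hx ha
        · exact absurd hx hb
      · rintro ⟨⟩
    rw [this, Set.ncard_empty]

section Structure
variable {n : ℕ} [NeZero n]

lemma wheel_src_eq_some {e : (wheel n).E} {i : Fin n} :
    (wheel n).src e = some i ↔ e = Sum.inl i := by
  rcases e with k | k
  · rw [wheel_src_inl]
    constructor
    · intro h; exact congrArg Sum.inl (Option.some.inj h)
    · intro h; rw [Sum.inl.inj h]
  · rw [wheel_src_inr]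
    constructor
    · intro h; exact absurd h (by simp)
    · intro h; exact absurd h (by simp)

lemma wheel_tgt_eq_some {e : (wheel n).E} {i : Fin n} :
    (wheel n).tgt e = some i ↔ (e = Sum.inl (i - 1) ∨ e = Sum.inr i) := by
  rcases e with k | k
  · rw [wheel_tgt_inl]
    constructor
    · intro h
      left
      have : k + 1 = i := Option.some.inj h
      rw [← this]; congr 1; abel
    · rintro (h | h)
      · replace h := Sum.inl.inj h
        subst h
        congr 1
        abel
      · exact absurd h (by simp)
  · rw [wheel_tgt_inr]
    constructor
    · intro h
      right
      exact congrArg Sum.inr (Option.some.inj h)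
    · rintro (h | h)
      · exact absurd h (by simp)
      · rw [Sum.inr.inj h]

lemma spoke_mem {J : Set (wheel n).E} (hJ : (wheel n).IsEvenSubgraph J) (i : Fin n) :
    Sum.inr i ∈ J ↔ ¬(Sum.inl i ∈ J ↔ Sum.inl (i - 1) ∈ J) := by
  have hrel := hJ (some i)
  have e1 : Nat.card {e : (wheel n).E // e ∈ J ∧ (wheel n).src e = some i}
      = (if Sum.inl i ∈ J then 1 else 0) := by
    have hset : {e : (wheel n).E | e ∈ J ∧ (wheel n).src e = some i} = J ∩ {Sum.inl i} := by
      ext e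
      simp only [Set.mem_setOf_eq, Set.mem_inter_iff, Set.mem_singleton_iff, wheel_src_eq_some]
      exact Iff.rfl
    calc Nat.card {e : (wheel n).E // e ∈ J ∧ (wheel n).src e = some i}
        = Set.ncard {e : (wheel n).E | e ∈ J ∧ (wheel n).src e = some i} :=
          Nat.card_coe_set_eq _
      _ = _ := by rw [hset]; exact ncard_inter_singleton _ _
  have e2 : Nat.card {e : (wheel n).E // e ∈ J ∧ (wheel n).tgt e = some i}
      = (if Sum.inl (i-1) ∈ J then 1 else 0) + (if Sum.inr i ∈ J then 1 else 0) := by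
    have hset : {e : (wheel n).E | e ∈ J ∧ (wheel n).tgt e = some i}
        = J ∩ {Sum.inl (i-1), Sum.inr i} := by
      ext e
      simp only [Set.mem_setOf_eq, Set.mem_inter_iff, Set.mem_insert_iff,
        Set.mem_singleton_iff, wheel_tgt_eq_some]
      exact Iff.rfl
    calc Nat.card {e : (wheel n).E // e ∈ J ∧ (wheel n).tgt e = some i}
        = Set.ncard {e : (wheel n).E | e ∈ J ∧ (wheel n).tgt e = some i} :=
          Nat.card_coe_set_eq _
      _ = _ := by
          rw [hset]; exact ncard_inter_pair _ _ _ (fun h => by cases h)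
  rw [e1, e2] at hrel
  by_cases hP : Sum.inl i ∈ J <;> by_cases hQ : Sum.inl (i-1) ∈ J <;>
    by_cases hR : Sum.inr i ∈ J <;>
    simp only [hP, hQ, hR, if_true, if_false, iff_true, iff_false, not_not,
      iff_self, not_true, not_false_iff] at hrel ⊢ <;>
    first
      | tauto
      | (exact absurd hrel (by decide))

end Structure

section ArcAux
open Set

lemma coe_eq_coe_iff {x y : ℝ} :
    ((x : ℝ) : AddCircle (5:ℝ)) = ((y : ℝ) : AddCircle (5:ℝ)) ↔ ∃ k : ℤ, y = x + 5 * k := by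
  constructor
  · intro h
    have h2 : x - y ∈ AddSubgroup.zmultiples (5:ℝ) := by
      rwa [QuotientAddGroup.eq_iff_sub_mem] at h
    obtain ⟨k, hk⟩ := AddSubgroup.mem_zmultiples_iff.mp h2
    exact ⟨-k, by push_cast [zsmul_eq_mul] at hk ⊢; linarith⟩
  · rintro ⟨k, rfl⟩
    symm
    apply (QuotientAddGroup.eq_iff_sub_mem).mpr
    apply AddSubgroup.mem_zmultiples_iff.mpr
    exact ⟨k, by push_cast [zsmul_eq_mul]; ring⟩

lemma coe_shift (x : ℝ) : ((x : ℝ) : AddCircle (5:ℝ)) = ((x + 5 : ℝ) : AddCircle (5:ℝ)) :=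
  (AddCircle.coe_add_period (5:ℝ) x).symm

lemma coe_sub' (x y : ℝ) : ((x - y : ℝ) : AddCircle (5:ℝ))
    = ((x:ℝ) : AddCircle (5:ℝ)) - ((y:ℝ) : AddCircle (5:ℝ)) := AddCircle.coe_sub _ x y

lemma arcEnd_12 : arcEnd 1 2 = 2 := by decide
lemma arcEnd_34 : arcEnd 3 4 = 4 := by decide
lemma arcEnd_14 : arcEnd 1 4 = 4 := by decide

lemma mem_arc12 {x : ℝ} (h1 : 1 < x) (h2 : x < 2) : ((x:ℝ) : AddCircle (5:ℝ)) ∈ arc 1 2 :=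
  ⟨x, by rw [arcEnd_12]; constructor <;> push_cast <;> linarith, rfl⟩
lemma mem_arc34 {x : ℝ} (h1 : 3 < x) (h2 : x < 4) : ((x:ℝ) : AddCircle (5:ℝ)) ∈ arc 3 4 :=
  ⟨x, by rw [arcEnd_34]; constructor <;> push_cast <;> linarith, rfl⟩
lemma mem_arc14 {x : ℝ} (h1 : 1 < x) (h2 : x < 4) : ((x:ℝ) : AddCircle (5:ℝ)) ∈ arc 1 4 :=
  ⟨x, by rw [arcEnd_14]; constructor <;> push_cast <;> linarith, rfl⟩
lemma mem_arc12_neg {x : ℝ} (h1 : -4 < x) (h2 : x < -3) : ((x:ℝ) : AddCircle (5:ℝ)) ∈ arc 1 2 := by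
  rw [coe_shift]; exact mem_arc12 (by linarith) (by linarith)
lemma mem_arc34_neg {x : ℝ} (h1 : -2 < x) (h2 : x < -1) : ((x:ℝ) : AddCircle (5:ℝ)) ∈ arc 3 4 := by
  rw [coe_shift]; exact mem_arc34 (by linarith) (by linarith)
lemma mem_arc14_neg {x : ℝ} (h1 : -4 < x) (h2 : x < -1) : ((x:ℝ) : AddCircle (5:ℝ)) ∈ arc 1 4 := by
  rw [coe_shift]; exact mem_arc14 (by linarith) (by linarith)

lemma A_subset_14 : arc 1 2 ∪ arc 3 4 ⊆ arc 1 4 := by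
  intro z hz
  rcases hz with ⟨t, ht, rfl⟩ | ⟨t, ht, rfl⟩
  · rw [arcEnd_12] at ht
    apply mem_arc14 <;> [skip; skip] <;> push_cast at ht <;> [linarith [ht.1]; linarith [ht.2]]
  · rw [arcEnd_34] at ht
    apply mem_arc14 <;> push_cast at ht
    · linarith [ht.1]
    · linarith [ht.2]

lemma arc14_out {z : AddCircle (5:ℝ)} (h : z ∈ arc 1 4) :
    ∃ t : ℝ, (1 < t ∧ t < 4) ∧ z = ((t:ℝ) : AddCircle (5:ℝ)) := by
  obtain ⟨t, ht, rfl⟩ := h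
  rw [arcEnd_14] at ht
  push_cast at ht
  exact ⟨t, ⟨ht.1, ht.2⟩, rfl⟩

lemma A_out {z : AddCircle (5:ℝ)} (h : z ∈ arc 1 2 ∪ arc 3 4) :
    ∃ t : ℝ, ((1 < t ∧ t < 2) ∨ (3 < t ∧ t < 4)) ∧ z = ((t:ℝ) : AddCircle (5:ℝ)) := by
  rcases h with ⟨t, ht, rfl⟩ | ⟨t, ht, rfl⟩
  · rw [arcEnd_12] at ht; push_cast at ht; exact ⟨t, Or.inl ⟨ht.1, ht.2⟩, rfl⟩
  · rw [arcEnd_34] at ht; push_cast at ht; exact ⟨t, Or.inr ⟨ht.1, ht.2⟩, rfl⟩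

lemma int_absurd01 {k : ℤ} (h1 : (0:ℝ) < k) (h2 : (k:ℝ) < 1) : False := by
  have a1 : 0 < k := by exact_mod_cast h1
  have a2 : k < 1 := by exact_mod_cast h2
  omega
lemma int_absurd_neg {k : ℤ} (h1 : (-1:ℝ) < k) (h2 : (k:ℝ) < 0) : False := by
  have a1 : -1 < k := by exact_mod_cast h1
  have a2 : k < 0 := by exact_mod_cast h2
  omega
lemma int_pin0 {k : ℤ} (h1 : (-1:ℝ) < k) (h2 : (k:ℝ) < 1) : k = 0 := by
  have a1 : -1 < k := by exact_mod_cast h1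
  have a2 : k < 1 := by exact_mod_cast h2
  omega
lemma int_pin1 {k : ℤ} (h1 : (0:ℝ) < k) (h2 : (k:ℝ) < 2) : k = 1 := by
  have a1 : 0 < k := by exact_mod_cast h1
  have a2 : k < 2 := by exact_mod_cast h2
  omega

lemma close_contra {d : ℝ} (h : -1 < d) (h' : d < 1)
    (hm : ((d : ℝ) : AddCircle (5:ℝ)) ∈ arc 1 4) : False := by
  obtain ⟨t, ⟨ht1, ht4⟩, hte⟩ := arc14_out hm
  obtain ⟨k, hk⟩ := coe_eq_coe_iff.mp hte
  exact int_absurd01 (by linarith) (by linarith)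

end ArcAux

noncomputable def oddVals (n : ℕ) : ℕ → ℝ := fun j =>
  if j = 0 then 2.5 else if j = 1 then 3.6 else if j = 2 then 1.8
  else if j = n - 1 then 1.4 else if j % 2 = 1 then 3.2 else 1.5

lemma oddVals_rim_A {n : ℕ} (hn : 5 ≤ n) {j : ℕ} (h0 : j ≠ 0) (hj : j < n) :
    ((oddVals n j : ℝ) : AddCircle (5:ℝ)) ∈ arc 1 2 ∪ arc 3 4 := by
  rcases eq_or_ne j 1 with rfl | h1
  · have : oddVals n 1 = 3.6 := by simp [oddVals]
    rw [this]; exact Or.inr (mem_arc34 (by norm_num) (by norm_num))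
  rcases eq_or_ne j 2 with rfl | h2
  · have : oddVals n 2 = 1.8 := by simp [oddVals]
    rw [this]; exact Or.inl (mem_arc12 (by norm_num) (by norm_num))
  rcases eq_or_ne j (n-1) with rfl | h3
  · have : oddVals n (n-1) = 1.4 := by
      simp only [oddVals, if_neg h0, if_neg h1, if_neg h2, if_pos rfl, if_true]
    rw [this]; exact Or.inl (mem_arc12 (by norm_num) (by norm_num))
  rcases Nat.even_or_odd j with he | hodd
  · have hpar : j % 2 = 0 := Nat.even_iff.mp he
    have : oddVals n j = 1.5 := by
      simp only [oddVals, if_neg h0, if_neg h1, if_neg h2, if_neg h3,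
        if_neg (by omega : ¬ j % 2 = 1)]
    rw [this]; exact Or.inl (mem_arc12 (by norm_num) (by norm_num))
  · have hpar : j % 2 = 1 := Nat.odd_iff.mp hodd
    have : oddVals n j = 3.2 := by
      simp only [oddVals, if_neg h0, if_neg h1, if_neg h2, if_neg h3, if_pos hpar, if_true]
    rw [this]; exact Or.inr (mem_arc34 (by norm_num) (by norm_num))

lemma oddVals_zero {n : ℕ} : oddVals n 0 = 2.5 := by simp [oddVals]

lemma oddVals_diff {n : ℕ} (hn : 5 ≤ n) (ho : n % 2 = 1) {j : ℕ} (hj : j < n) :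
    ((oddVals n j - oddVals n (if j = 0 then n - 1 else j - 1) : ℝ) : AddCircle (5:ℝ))
      ∈ arc 1 2 ∪ arc 3 4 := by
  rcases eq_or_ne j 0 with rfl | h0
  · rw [if_pos rfl, oddVals_zero]
    have : oddVals n (n-1) = 1.4 := by
      simp only [oddVals, if_neg (by omega : n-1 ≠ 0), if_neg (by omega : n-1 ≠ 1),
        if_neg (by omega : n-1 ≠ 2), if_pos rfl, if_true]
    rw [this]
    exact Or.inl (mem_arc12 (by norm_num) (by norm_num))
  rw [if_neg h0]
  rcases eq_or_ne j 1 with rfl | h1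
  · have e1 : oddVals n 1 = 3.6 := by simp [oddVals]
    have e2 : oddVals n (1-1) = 2.5 := oddVals_zero
    rw [e1, e2]
    exact Or.inl (mem_arc12 (by norm_num) (by norm_num))
  rcases eq_or_ne j 2 with rfl | h2
  · have e1 : oddVals n 2 = 1.8 := by simp [oddVals]
    have e2 : oddVals n (2-1) = 3.6 := by simp [oddVals]
    rw [e1, e2]
    exact Or.inr (mem_arc34_neg (by norm_num) (by norm_num))
  rcases eq_or_ne j 3 with rfl | h3
  · have e1 : oddVals n 3 = 3.2 := by
      simp only [oddVals, if_neg (by omega : (3:ℕ) ≠ 0), if_neg (by omega : (3:ℕ) ≠ 1),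
        if_neg (by omega : (3:ℕ) ≠ 2), if_neg (by omega : 3 ≠ n-1), if_pos (by omega : 3 % 2 = 1), if_true]
    have e2 : oddVals n (3-1) = 1.8 := by simp [oddVals]
    rw [e1, e2]
    exact Or.inl (mem_arc12 (by norm_num) (by norm_num))
  rcases eq_or_ne j (n-1) with rfl | h4
  · have e1 : oddVals n (n-1) = 1.4 := by
      simp only [oddVals, if_neg (by omega : n-1 ≠ 0), if_neg (by omega : n-1 ≠ 1),
        if_neg (by omega : n-1 ≠ 2), if_pos rfl, if_true]
    have e2 : oddVals n (n-1-1) = 3.2 := by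
      simp only [oddVals, if_neg (by omega : n-1-1 ≠ 0), if_neg (by omega : n-1-1 ≠ 1),
        if_neg (by omega : n-1-1 ≠ 2), if_neg (by omega : n-1-1 ≠ n-1),
        if_pos (by omega : (n-1-1) % 2 = 1), if_true]
    rw [e1, e2]
    exact Or.inr (mem_arc34_neg (by norm_num) (by norm_num))
  -- generic : 4 ≤ j ≤ n - 2
  have hb : 4 ≤ j ∧ j ≤ n - 2 := by omega
  rcases Nat.even_or_odd j with he | hodd
  · have hpar : j % 2 = 0 := Nat.even_iff.mp he
    have e1 : oddVals n j = 1.5 := by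
      simp only [oddVals, if_neg h0, if_neg h1, if_neg h2, if_neg h4, if_neg (by omega : ¬ j % 2 = 1)]
    have e2 : oddVals n (j-1) = 3.2 := by
      simp only [oddVals, if_neg (by omega : j-1 ≠ 0), if_neg (by omega : j-1 ≠ 1),
        if_neg (by omega : j-1 ≠ 2), if_neg (by omega : j-1 ≠ n-1),
        if_pos (by omega : (j-1) % 2 = 1), if_true]
    rw [e1, e2]
    exact Or.inr (mem_arc34_neg (by norm_num) (by norm_num))
  · have hpar : j % 2 = 1 := Nat.odd_iff.mp hodd
    have e1 : oddVals n j = 3.2 := by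
      simp only [oddVals, if_neg h0, if_neg h1, if_neg h2, if_neg h4, if_pos (by omega : j % 2 = 1), if_true]
    have e2 : oddVals n (j-1) = 1.5 := by
      simp only [oddVals, if_neg (by omega : j-1 ≠ 0), if_neg (by omega : j-1 ≠ 1),
        if_neg (by omega : j-1 ≠ 2), if_neg (by omega : j-1 ≠ n-1),
        if_neg (by omega : ¬ (j-1) % 2 = 1)]
    rw [e1, e2]
    exact Or.inl (mem_arc12 (by norm_num) (by norm_num))

lemma oddVals_mem14 {n : ℕ} (hn : 5 ≤ n) {j : ℕ} (hj : j < n) :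
    ((oddVals n j : ℝ) : AddCircle (5:ℝ)) ∈ arc 1 4 := by
  rcases eq_or_ne j 0 with rfl | h0
  · rw [oddVals_zero]; exact mem_arc14 (by norm_num) (by norm_num)
  · exact A_subset_14 (oddVals_rim_A hn h0 hj)

section Constructions
open Set

/-- Even `n`: the alternating flow works for every `J`. -/
lemma faithful_even {n : ℕ} (hn : 4 ≤ n) (hpar : n % 2 = 0) (J : Set (wheel n).E) :
    (wheel n).HasFaithfulOn J (arc 1 2 ∪ arc 3 4) := by
  haveI : NeZero n := ⟨by omega⟩
  set r : Fin n → AddCircle (5:ℝ) :=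
    fun i => (((if i.val % 2 = 0 then (1.5:ℝ) else 3.2) : ℝ) : AddCircle (5:ℝ)) with hr
  have key : ∀ e : (wheel n).E,
      Sum.elim r (fun i => r i - r (i - 1)) e ∈ arc 1 2 ∪ arc 3 4 := by
    intro e
    rcases e with i | i
    · simp only [Sum.elim_inl, hr]
      rcases Nat.eq_zero_or_pos (i.val % 2) with h | h
      · rw [if_pos h]; exact Or.inl (mem_arc12 (by norm_num) (by norm_num))
      · rw [if_neg (by omega)]; exact Or.inr (mem_arc34 (by norm_num) (by norm_num))
    · simp only [Sum.elim_inr, hr]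
      have hval : (i - 1).val = if i.val = 0 then n - 1 else i.val - 1 :=
        fin_sub_one_val i (by omega)
      have hne : (i - 1).val % 2 ≠ i.val % 2 := by
        rw [hval]
        rcases Nat.eq_zero_or_pos i.val with h | h
        · rw [if_pos h, h]; omega
        · rw [if_neg (by omega)]; omega
      rcases Nat.eq_zero_or_pos (i.val % 2) with h | h
      · rw [if_pos h, if_neg (by omega)]
        rw [← coe_sub']
        exact Or.inr (mem_arc34_neg (by norm_num) (by norm_num))
      · rw [if_neg (by omega), if_pos (by omega)]
        rw [← coe_sub']
        exact Or.inl (mem_arc12 (by norm_num) (by norm_num))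
  exact ⟨Sum.elim r (fun i => r i - r (i - 1)), wheel_isFlow r,
    fun e _ => key e, fun e _ => A_subset_14 (key e)⟩

/-- Odd `n ≥ 5`: the flow with one defect placed on a non-`J` rim edge. -/
lemma faithful_odd {n : ℕ} (hn : 5 ≤ n) (hpar : n % 2 = 1) (J : Set (wheel n).E)
    (i1 : Fin n) (hi1 : Sum.inl i1 ∉ J) :
    (wheel n).HasFaithfulOn J (arc 1 2 ∪ arc 3 4) := by
  haveI : NeZero n := ⟨by omega⟩
  set r : Fin n → AddCircle (5:ℝ) :=
    fun i => ((oddVals n ((i - i1).val) : ℝ) : AddCircle (5:ℝ)) with hr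
  refine ⟨Sum.elim r (fun i => r i - r (i - 1)), wheel_isFlow r, ?_, ?_⟩
  · intro e he
    rcases e with i | i
    · simp only [Sum.elim_inl, hr]
      have hne : (i - i1).val ≠ 0 := by
        intro h
        exact hi1 (by rwa [sub_eq_zero.mp (Fin.ext h : i - i1 = 0)] at he)
      exact oddVals_rim_A hn hne (i - i1).isLt
    · simp only [Sum.elim_inr, hr]
      have hrel : (i - 1) - i1 = (i - i1) - 1 := sub_right_comm i 1 i1
      rw [hrel, fin_sub_one_val (i - i1) (by omega), ← coe_sub']
      exact oddVals_diff hn hpar (i - i1).isLt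
  · intro e he
    rcases e with i | i
    · simp only [Sum.elim_inl, hr]
      exact oddVals_mem14 hn (i - i1).isLt
    · simp only [Sum.elim_inr, hr]
      have hrel : (i - 1) - i1 = (i - i1) - 1 := sub_right_comm i 1 i1
      rw [hrel, fin_sub_one_val (i - i1) (by omega), ← coe_sub']
      exact A_subset_14 (oddVals_diff hn hpar (i - i1).isLt)

noncomputable def vals3 : ℕ → ℝ := fun j => if j = 0 then 2.7 else if j = 1 then 1.5 else 3.9

/-- `n = 3`: the flow for a 4-cycle `J` (rim edges at `i2+1, i2+2`, none at `i2`). -/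
lemma faithful3 (J : Set (wheel 3).E) (hJ : (wheel 3).IsEvenSubgraph J)
    (i2 : Fin 3) (h0 : Sum.inl i2 ∉ J) (h1 : Sum.inl (i2+1) ∈ J) (h2 : Sum.inl (i2+2) ∈ J) :
    (wheel 3).HasFaithfulOn J (arc 1 2 ∪ arc 3 4) := by
  set r : Fin 3 → AddCircle (5:ℝ) :=
    fun i => ((vals3 ((i - i2).val) : ℝ) : AddCircle (5:ℝ)) with hr
  have hval : ∀ i : Fin 3, i - i2 = 0 ∨ i - i2 = 1 ∨ i - i2 = 2 := by
    intro i
    have : ∀ x : Fin 3, x = 0 ∨ x = 1 ∨ x = 2 := by decide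
    exact this _
  have hspoke_val : ∀ i : Fin 3,
      Sum.elim r (fun i => r i - r (i - 1)) (Sum.inr i)
        = ((vals3 ((i - i2).val) - vals3 (((i - i2) - 1).val) : ℝ) : AddCircle (5:ℝ)) := by
    intro i
    simp only [Sum.elim_inr, hr, ← coe_sub']
    congr 2
    rw [sub_right_comm]
  refine ⟨Sum.elim r (fun i => r i - r (i - 1)), wheel_isFlow r, ?_, ?_⟩
  · intro e he
    rcases e with i | i
    · simp only [Sum.elim_inl, hr]
      rcases hval i with h | h | h
      · exact absurd he (by rw [sub_eq_zero.mp h]; exact h0)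
      · rw [h]
        have : vals3 ((1:Fin 3).val) = 1.5 := by norm_num [vals3]
        rw [this]; exact Or.inl (mem_arc12 (by norm_num) (by norm_num))
      · rw [h]
        have : vals3 ((2:Fin 3).val) = 3.9 := by norm_num [vals3]
        rw [this]; exact Or.inr (mem_arc34 (by norm_num) (by norm_num))
    · rw [hspoke_val i]
      rcases hval i with h | h | h
      · rw [h, show (0:Fin 3) - 1 = 2 by decide]
        have : vals3 ((0:Fin 3).val) - vals3 ((2:Fin 3).val) = -1.2 := by norm_num [vals3]
        rw [this]; exact Or.inr (mem_arc34_neg (by norm_num) (by norm_num))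
      · rw [h, show (1:Fin 3) - 1 = 0 by decide]
        have : vals3 ((1:Fin 3).val) - vals3 ((0:Fin 3).val) = -1.2 := by norm_num [vals3]
        rw [this]; exact Or.inr (mem_arc34_neg (by norm_num) (by norm_num))
      · -- i = i2 + 2 : this spoke is not in J
        exfalso
        have hi : i = i2 + 2 := by
          have := sub_eq_iff_eq_add.mp h
          rwa [add_comm] at this
        subst hi
        have hsm := spoke_mem hJ (i2 + 2)
        rw [show (i2 + 2) - 1 = i2 + 1 by rw [add_sub_assoc]; norm_num; decide] at hsm
        exact (hsm.mp he) (iff_of_true h2 h1)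
  · intro e he
    rcases e with i | i
    · simp only [Sum.elim_inl, hr]
      rcases hval i with h | h | h <;> rw [h]
      · have : vals3 ((0:Fin 3).val) = 2.7 := by norm_num [vals3]
        rw [this]; exact mem_arc14 (by norm_num) (by norm_num)
      · have : vals3 ((1:Fin 3).val) = 1.5 := by norm_num [vals3]
        rw [this]; exact mem_arc14 (by norm_num) (by norm_num)
      · have : vals3 ((2:Fin 3).val) = 3.9 := by norm_num [vals3]
        rw [this]; exact mem_arc14 (by norm_num) (by norm_num)
    · rw [hspoke_val i]
      rcases hval i with h | h | h <;> rw [h]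
      · rw [show (0:Fin 3) - 1 = 2 by decide]
        have : vals3 ((0:Fin 3).val) - vals3 ((2:Fin 3).val) = -1.2 := by norm_num [vals3]
        rw [this]; exact mem_arc14_neg (by norm_num) (by norm_num)
      · rw [show (1:Fin 3) - 1 = 0 by decide]
        have : vals3 ((1:Fin 3).val) - vals3 ((0:Fin 3).val) = -1.2 := by norm_num [vals3]
        rw [this]; exact mem_arc14_neg (by norm_num) (by norm_num)
      · rw [show (2:Fin 3) - 1 = 1 by decide]
        have : vals3 ((2:Fin 3).val) - vals3 ((1:Fin 3).val) = 2.4 := by norm_num [vals3]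
        rw [this]; exact mem_arc14 (by norm_num) (by norm_num)

end Constructions

section Negative

lemma fin3_facts : ∀ w : Fin 3, w + 1 ≠ w ∧ w + 2 ≠ w ∧ w + 1 + 1 = w + 2 ∧ w + 2 + 1 = w ∧
    w - 1 = w + 2 ∧ (w + 1) - 1 = w ∧ (w + 2) - 1 = w + 1 := by decide

lemma triangle_no_flow {J : Set (wheel 3).E} (htri : IsTriangle 3 J) :
    ¬ (wheel 3).HasFaithfulOn J (arc 1 2 ∪ arc 3 4) := by
  rintro ⟨f, hflow, hJmem, hNmem⟩
  obtain ⟨v, hv⟩ := htri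
  have hspoke : ∀ j : Fin 3, f (Sum.inr j) = f (Sum.inl j) - f (Sum.inl (j-1)) :=
    fun j => flow_spoke hflow j
  rcases v with _ | w
  · -- J is the external cycle
    have hJr : ∀ i : Fin 3, Sum.inl i ∈ J := by
      intro i; rw [hv]
      exact ⟨by rw [wheel_src_inl]; exact (fun h => by cases h), by rw [wheel_tgt_inl]; exact (fun h => by cases h)⟩
    have hJs : ∀ i : Fin 3, Sum.inr i ∉ J := by
      intro i; rw [hv]
      intro hh
      exact hh.1 (by rw [wheel_src_inr])
    obtain ⟨x0, hx0, he0⟩ := A_out (hJmem _ (hJr 0))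
    obtain ⟨x1, hx1, he1⟩ := A_out (hJmem _ (hJr 1))
    obtain ⟨x2, hx2, he2⟩ := A_out (hJmem _ (hJr 2))
    have g0 := hNmem _ (hJs 0)
    have g1 := hNmem _ (hJs 1)
    have g2 := hNmem _ (hJs 2)
    rw [hspoke 0, show (0:Fin 3)-1 = 2 by decide, he0, he2, ← coe_sub'] at g0
    rw [hspoke 1, show (1:Fin 3)-1 = 0 by decide, he1, he0, ← coe_sub'] at g1
    rw [hspoke 2, show (2:Fin 3)-1 = 1 by decide, he2, he1, ← coe_sub'] at g2
    -- pigeonhole on intervals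
    rcases hx0 with ⟨a0, b0⟩ | ⟨a0, b0⟩ <;> rcases hx1 with ⟨a1, b1⟩ | ⟨a1, b1⟩ <;>
      rcases hx2 with ⟨a2, b2⟩ | ⟨a2, b2⟩
    · exact close_contra (by linarith) (by linarith) g1
    · exact close_contra (by linarith) (by linarith) g1
    · exact close_contra (by linarith) (by linarith) g0
    · exact close_contra (by linarith) (by linarith) g2
    · exact close_contra (by linarith) (by linarith) g2
    · exact close_contra (by linarith) (by linarith) g0
    · exact close_contra (by linarith) (by linarith) g1
    · exact close_contra (by linarith) (by linarith) g1
  · -- J is the triangle avoiding the rim vertex w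
    obtain ⟨hw1, hw2, hw3, hw4, hw5, hw6, hw7⟩ := fin3_facts w
    have hA : Sum.inl (w+1) ∈ J := by
      rw [hv]
      refine ⟨?_, ?_⟩
      · rw [wheel_src_inl]; exact fun hh => hw1 (Option.some.inj hh)
      · rw [wheel_tgt_inl, hw3]; exact fun hh => hw2 (Option.some.inj hh)
    have hB : Sum.inl w ∉ J := by
      rw [hv]; intro hh; exact hh.1 (by rw [wheel_src_inl])
    have hC : Sum.inl (w+2) ∉ J := by
      rw [hv]; intro hh; exact hh.2 (by rw [wheel_tgt_inl, hw4])
    have hD : Sum.inr (w+1) ∈ J := by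
      rw [hv]
      refine ⟨by rw [wheel_src_inr]; exact (fun h => by cases h), ?_⟩
      · rw [wheel_tgt_inr]; exact fun hh => hw1 (Option.some.inj hh)
    have hE : Sum.inr (w+2) ∈ J := by
      rw [hv]
      refine ⟨by rw [wheel_src_inr]; exact (fun h => by cases h), ?_⟩
      · rw [wheel_tgt_inr]; exact fun hh => hw2 (Option.some.inj hh)
    have hF : Sum.inr w ∉ J := by
      rw [hv]; intro hh; exact hh.2 (by rw [wheel_tgt_inr])
    obtain ⟨b, hb, heb⟩ := A_out (hJmem _ hA)
    obtain ⟨u, ⟨hu1, hu4⟩, heu⟩ := arc14_out (hNmem _ hB)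
    obtain ⟨vv, ⟨hv1, hv4⟩, hev⟩ := arc14_out (hNmem _ hC)
    have g1 := hJmem _ hD
    have g2 := hJmem _ hE
    have g3 := hNmem _ hF
    rw [hspoke (w+1), hw6, heb, heu, ← coe_sub'] at g1
    rw [hspoke (w+2), hw7, hev, heb, ← coe_sub'] at g2
    rw [hspoke w, hw5, heu, hev, ← coe_sub'] at g3
    obtain ⟨s1, hs1, hes1⟩ := A_out g1
    obtain ⟨s2, hs2, hes2⟩ := A_out g2
    obtain ⟨t, ⟨ht1, ht4⟩, het⟩ := arc14_out g3
    obtain ⟨k1, hk1⟩ := coe_eq_coe_iff.mp hes1.symm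
    obtain ⟨k2, hk2⟩ := coe_eq_coe_iff.mp hes2.symm
    obtain ⟨k3, hk3⟩ := coe_eq_coe_iff.mp het.symm
    -- hk1 : b - u = s1 + 5 k1, hk2 : vv - b = s2 + 5 k2, hk3 : u - vv = t + 5 k3
    rcases hb with ⟨hb1, hb2⟩ | ⟨hb1, hb2⟩
    · rcases hs1 with ⟨c1, c2⟩ | ⟨c1, c2⟩
      · exact int_absurd_neg (k := k1) (by linarith) (by linarith)
      · have hk1e : k1 = -1 := by
          have : (-2:ℝ) < k1 := by linarith
          have : (k1:ℝ) < 0 := by linarith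
          have a1 : (-2:ℤ) < k1 := by exact_mod_cast ‹(-2:ℝ) < k1›
          have a2 : k1 < 0 := by exact_mod_cast ‹(k1:ℝ) < 0›
          omega
        rcases hs2 with ⟨d1, d2⟩ | ⟨d1, d2⟩
        · have hk2e : k2 = 0 := int_pin0 (by linarith) (by linarith)
          rw [hk1e] at hk1
          rw [hk2e] at hk2
          exact int_absurd_neg (k := k3) (by push_cast at hk1 hk2 hk3 ⊢; linarith)
            (by push_cast at hk1 hk2 hk3 ⊢; linarith)
        · exact int_absurd_neg (k := k2) (by linarith) (by linarith)
    · rcases hs1 with ⟨c1, c2⟩ | ⟨c1, c2⟩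
      · have hk1e : k1 = 0 := int_pin0 (by linarith) (by linarith)
        rcases hs2 with ⟨d1, d2⟩ | ⟨d1, d2⟩
        · exact int_absurd_neg (k := k2) (by linarith) (by linarith)
        · have hk2e : k2 = -1 := by
            have q1 : (-2:ℝ) < k2 := by linarith
            have q2 : (k2:ℝ) < 0 := by linarith
            have a1 : (-2:ℤ) < k2 := by exact_mod_cast q1
            have a2 : k2 < 0 := by exact_mod_cast q2
            omega
          rw [hk1e] at hk1
          rw [hk2e] at hk2
          exact int_absurd_neg (k := k3) (by push_cast at hk1 hk2 hk3 ⊢; linarith)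
            (by push_cast at hk1 hk2 hk3 ⊢; linarith)
      · exact int_absurd_neg (k := k1) (by linarith) (by linarith)

end Negative

lemma some_ne_some {n : ℕ} {a b : Fin n} (h : ¬ a = b) :
    (some a : Option (Fin n)) ≠ some b := fun hh => h (Option.some.inj hh)


/-- for `n ≥ 4` and any nonempty even subgraph `J` of `W_n` other
than the external cycle, the wheel admits a `σ_{J,(1,2)∪(3,4)}`-faithful flow;
for `n = 3` such a flow exists iff `J` is not a 3-cycle. -/
theorem wheel_12_34_not_ext_cycle :
    (∀ n : ℕ, 4 ≤ n → ∀ J : Set (wheel n).E, (wheel n).IsEvenSubgraph J →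
      J.Nonempty → J ≠ Set.range Sum.inl →
      (wheel n).HasFaithfulOn J (arc 1 2 ∪ arc 3 4)) ∧
    (∀ J : Set (wheel 3).E, (wheel 3).IsEvenSubgraph J → J.Nonempty →
      ((wheel 3).HasFaithfulOn J (arc 1 2 ∪ arc 3 4) ↔ ¬ IsTriangle 3 J)) := by
  constructor
  · intro n hn J hJ hne hnrange
    haveI : NeZero n := ⟨by omega⟩
    rcases Nat.even_or_odd n with hpar | hpar
    · exact faithful_even hn (Nat.even_iff.mp hpar) J
    · have hn5 : 5 ≤ n := by
        have := Nat.odd_iff.mp hpar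
        omega
      have hex : ∃ i1 : Fin n, Sum.inl i1 ∉ J := by
        by_contra hcon
        push_neg at hcon
        apply hnrange
        ext e
        rcases e with k | k
        · exact iff_of_true (hcon k) ⟨k, rfl⟩
        · refine iff_of_false ?_ ?_
          · intro hk
            exact (spoke_mem hJ k).mp hk (iff_of_true (hcon k) (hcon (k-1)))
          · rintro ⟨m, hm⟩
            cases hm
      obtain ⟨i1, hi1⟩ := hex
      exact faithful_odd hn5 (Nat.odd_iff.mp hpar) J i1 hi1
  · intro J hJ hne
    constructor
    · intro hflow htri
      exact triangle_no_flow htri hflow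
    · intro htri
      have s0 := spoke_mem hJ (0 : Fin 3)
      have s1 := spoke_mem hJ (1 : Fin 3)
      have s2 := spoke_mem hJ (2 : Fin 3)
      rw [show (0:Fin 3)-1 = 2 by decide] at s0
      rw [show (1:Fin 3)-1 = 0 by decide] at s1
      rw [show (2:Fin 3)-1 = 1 by decide] at s2
      by_cases t0 : Sum.inl (0:Fin 3) ∈ J <;> by_cases t1 : Sum.inl (1:Fin 3) ∈ J <;>
        by_cases t2 : Sum.inl (2:Fin 3) ∈ J
      · -- TTT : external cycle, a triangle
        exfalso
        apply htri
        refine ⟨none, ?_⟩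
        ext e
        fin_cases e
        · exact iff_of_true t0 ⟨by rw [wheel_src_inl]; exact (fun h => by cases h),
            by rw [wheel_tgt_inl]; exact (fun h => by cases h)⟩
        · exact iff_of_true t1 ⟨by rw [wheel_src_inl]; exact (fun h => by cases h),
            by rw [wheel_tgt_inl]; exact (fun h => by cases h)⟩
        · exact iff_of_true t2 ⟨by rw [wheel_src_inl]; exact (fun h => by cases h),
            by rw [wheel_tgt_inl]; exact (fun h => by cases h)⟩
        · exact iff_of_false (fun h => (s0.mp h) (iff_of_true t0 t2))
            (fun hh => hh.1 (by rw [wheel_src_inr]))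
        · exact iff_of_false (fun h => (s1.mp h) (iff_of_true t1 t0))
            (fun hh => hh.1 (by rw [wheel_src_inr]))
        · exact iff_of_false (fun h => (s2.mp h) (iff_of_true t2 t1))
            (fun hh => hh.1 (by rw [wheel_src_inr]))
      · -- TTF : 4-cycle, defect at rim 2
        refine faithful3 J hJ 2 t2 ?_ ?_
        · rw [show (2:Fin 3)+1 = 0 by decide]; exact t0
        · rw [show (2:Fin 3)+2 = 1 by decide]; exact t1
      · -- TFT : defect at rim 1
        refine faithful3 J hJ 1 t1 ?_ ?_
        · rw [show (1:Fin 3)+1 = 2 by decide]; exact t2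
        · rw [show (1:Fin 3)+2 = 0 by decide]; exact t0
      · -- TFF : triangle avoiding vertex 2
        exfalso
        apply htri
        refine ⟨some 2, ?_⟩
        ext e
        fin_cases e
        · exact iff_of_true t0 ⟨by rw [wheel_src_inl]; exact some_ne_some (by decide), by rw [wheel_tgt_inl]; exact some_ne_some (by decide)⟩
        · refine iff_of_false t1 ?_
          intro hh
          exact hh.2 (by rw [wheel_tgt_inl]; exact congrArg some (by decide))
        · refine iff_of_false t2 ?_
          intro hh
          exact hh.1 (by rw [wheel_src_inl]; exact congrArg some (by decide))
        · exact iff_of_true (s0.mpr (fun hiff => t2 (hiff.mp t0)))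
            ⟨by rw [wheel_src_inr]; exact (fun h => by cases h), by rw [wheel_tgt_inr]; exact some_ne_some (by decide)⟩
        · exact iff_of_true (s1.mpr (fun hiff => t1 (hiff.mpr t0)))
            ⟨by rw [wheel_src_inr]; exact (fun h => by cases h), by rw [wheel_tgt_inr]; exact some_ne_some (by decide)⟩
        · refine iff_of_false (fun h => (s2.mp h) (iff_of_false t2 t1)) ?_
          intro hh
          exact hh.2 (by rw [wheel_tgt_inr]; exact congrArg some (by decide))
      · -- FTT : defect at rim 0
        refine faithful3 J hJ 0 t0 ?_ ?_
        · rw [show (0:Fin 3)+1 = 1 by decide]; exact t1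
        · rw [show (0:Fin 3)+2 = 2 by decide]; exact t2
      · -- FTF : triangle avoiding vertex 0
        exfalso
        apply htri
        refine ⟨some 0, ?_⟩
        ext e
        fin_cases e
        · refine iff_of_false t0 ?_
          intro hh
          exact hh.1 (by rw [wheel_src_inl]; exact congrArg some (by decide))
        · exact iff_of_true t1 ⟨by rw [wheel_src_inl]; exact some_ne_some (by decide), by rw [wheel_tgt_inl]; exact some_ne_some (by decide)⟩
        · refine iff_of_false t2 ?_
          intro hh
          exact hh.2 (by rw [wheel_tgt_inl]; exact congrArg some (by decide))
        · refine iff_of_false (fun h => (s0.mp h) (iff_of_false t0 t2)) ?_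
          intro hh
          exact hh.2 (by rw [wheel_tgt_inr]; exact congrArg some (by decide))
        · exact iff_of_true (s1.mpr (fun hiff => t0 (hiff.mp t1)))
            ⟨by rw [wheel_src_inr]; exact (fun h => by cases h), by rw [wheel_tgt_inr]; exact some_ne_some (by decide)⟩
        · exact iff_of_true (s2.mpr (fun hiff => t2 (hiff.mpr t1)))
            ⟨by rw [wheel_src_inr]; exact (fun h => by cases h), by rw [wheel_tgt_inr]; exact some_ne_some (by decide)⟩
      · -- FFT : triangle avoiding vertex 1
        exfalso
        apply htri
        refine ⟨some 1, ?_⟩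
        ext e
        fin_cases e
        · refine iff_of_false t0 ?_
          intro hh
          exact hh.2 (by rw [wheel_tgt_inl]; exact congrArg some (by decide))
        · refine iff_of_false t1 ?_
          intro hh
          exact hh.1 (by rw [wheel_src_inl]; exact congrArg some (by decide))
        · exact iff_of_true t2 ⟨by rw [wheel_src_inl]; exact some_ne_some (by decide), by rw [wheel_tgt_inl]; exact some_ne_some (by decide)⟩
        · exact iff_of_true (s0.mpr (fun hiff => t0 (hiff.mpr t2)))
            ⟨by rw [wheel_src_inr]; exact (fun h => by cases h), by rw [wheel_tgt_inr]; exact some_ne_some (by decide)⟩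
        · refine iff_of_false (fun h => (s1.mp h) (iff_of_false t1 t0)) ?_
          intro hh
          exact hh.2 (by rw [wheel_tgt_inr]; exact congrArg some (by decide))
        · exact iff_of_true (s2.mpr (fun hiff => t1 (hiff.mp t2)))
            ⟨by rw [wheel_src_inr]; exact (fun h => by cases h), by rw [wheel_tgt_inr]; exact some_ne_some (by decide)⟩
      · -- FFF : J must be empty
        exfalso
        obtain ⟨e, he⟩ := hne
        rcases e with k | k
        · fin_cases k
          · exact t0 he
          · exact t1 he
          · exact t2 he
        · fin_cases k
          · exact (s0.mp he) (iff_of_false t0 t2)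
          · exact (s1.mp he) (iff_of_false t1 t0)
          · exact (s2.mp he) (iff_of_false t2 t1)
end
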